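/- Let t > 0, k ∈ ℕ with k ≥ 1, τ = t/k, and λ, ε > 0. Then for any β ∈ [0,1], |e^{iετλ/2·k} - e^{2ik·arctan(ετλ/4)}| ≤ 2 k^β |ετλ/4 - arctan(ετλ/4)|^β ≤ C k^β (ετλ)^{3β} for an absolute constant C > 0. -/

import Mathlib

/-!
With `x = ετλ/4` the two phases `ετλk/2` and `2k·arctan x` differ by `2k(x - arctan x)`.
The chord between two points of the unit circle is `|e^{ia} - e^{ib}| = 2|sin((a - b)/2)|`,
and `|sin y| ≤ min 1 |y| ≤ |y|^β` for `β ∈ [0, 1]`. Finally `0 ≤ x - arctan x ≤ x³/3` for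
`x ≥ 0`, since both differences vanish at `0` and have derivatives `x²/(1 + x²)` and
`x⁴/(1 + x²)`; this gives the second inequality with `C = 2`.
-/

open Real

theorem monotone_sub_arctan : Monotone fun x : ℝ => x - arctan x :=
  monotone_of_hasDerivAt_nonneg (f' := fun x => 1 - 1 / (1 + x ^ 2))
    (fun x => (hasDerivAt_id x).sub (hasDerivAt_arctan x))
    fun x => show (0 : ℝ) ≤ 1 - 1 / (1 + x ^ 2) by
      rw [sub_nonneg, div_le_one (by positivity)]
      nlinarith [sq_nonneg x]

theorem monotone_cube_div_three_sub_add_arctan :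
    Monotone fun x : ℝ => x ^ 3 / 3 - x + arctan x :=
  monotone_of_hasDerivAt_nonneg (f' := fun x => x ^ 2 - 1 + 1 / (1 + x ^ 2))
    (fun x => ((((hasDerivAt_pow 3 x).div_const 3).sub (hasDerivAt_id x)).add
      (hasDerivAt_arctan x)).congr_deriv (by norm_num))
    fun x => show (0 : ℝ) ≤ x ^ 2 - 1 + 1 / (1 + x ^ 2) by
      have hx : (0 : ℝ) < 1 + x ^ 2 := by positivity
      have : x ^ 2 - 1 + 1 / (1 + x ^ 2) = x ^ 4 / (1 + x ^ 2) := by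
        field_simp; ring
      simp only [this]
      positivity

theorem abs_self_sub_arctan_le {x : ℝ} (hx : 0 ≤ x) : |x - arctan x| ≤ x ^ 3 / 3 := by
  have hlower := monotone_sub_arctan hx
  have hupper := monotone_cube_div_three_sub_add_arctan hx
  simp only [arctan_zero, sub_self, sub_nonneg, ne_eq, OfNat.ofNat_ne_zero, not_false_eq_true,
    zero_pow, zero_div, add_zero] at hlower hupper
  rw [abs_of_nonneg (by linarith)]
  linarith

theorem abs_sin_le_abs_rpow (x : ℝ) {β : ℝ} (hβ0 : 0 ≤ β) (hβ1 : β ≤ 1) :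
    |sin x| ≤ |x| ^ β := by
  rcases le_total |x| 1 with hx | hx
  · calc |sin x| ≤ |x| := abs_sin_le_abs
      _ = |x| ^ (1 : ℝ) := (rpow_one _).symm
      _ ≤ |x| ^ β := rpow_le_rpow_of_exponent_ge' (abs_nonneg x) hx hβ0 hβ1
  · exact (abs_sin_le_one x).trans (one_le_rpow hx hβ0)

theorem norm_exp_mul_I_sub_exp_mul_I (a b : ℝ) :
    ‖Complex.exp (a * Complex.I) - Complex.exp (b * Complex.I)‖ = 2 * |sin ((a - b) / 2)| := by
  have : Complex.exp (a * Complex.I) - Complex.exp (b * Complex.I) =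
      Complex.exp (b * Complex.I) * (Complex.exp (Complex.I * (a - b : ℝ)) - 1) := by
    rw [mul_sub, ← Complex.exp_add]; push_cast; ring_nf
  rw [this, norm_mul, Complex.norm_exp_ofReal_mul_I, one_mul,
    Complex.norm_exp_I_mul_ofReal_sub_one, norm_mul, Real.norm_eq_abs, Real.norm_eq_abs, abs_two]

theorem norm_exp_mul_I_sub_exp_mul_I_le_rpow (a b : ℝ) {β : ℝ} (hβ0 : 0 ≤ β) (hβ1 : β ≤ 1) :
    ‖Complex.exp (a * Complex.I) - Complex.exp (b * Complex.I)‖ ≤ 2 * |(a - b) / 2| ^ β := by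
  rw [norm_exp_mul_I_sub_exp_mul_I]
  gcongr
  exact abs_sin_le_abs_rpow _ hβ0 hβ1

/-- Scalar-mode midpoint-scheme estimate: with `t > 0`, `k ≥ 1`, `τ = t/k`,
`λ, ε > 0` and `β ∈ [0,1]`,
`|e^{iετλk/2} - e^{2ik·arctan(ετλ/4)}| ≤ 2 k^β |ετλ/4 - arctan(ετλ/4)|^β
  ≤ C k^β (ετλ)^{3β}` for an absolute constant `C > 0`. -/
theorem midpoint_scalar_estimate :
    ∃ C : ℝ, C > 0 ∧
      ∀ (t : ℝ) (k : ℕ) (τ lam ε β : ℝ), 0 < t → 1 ≤ k → τ = t / k →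
        0 < lam → 0 < ε → 0 ≤ β → β ≤ 1 →
        ‖Complex.exp (Complex.I * (ε * τ * lam / 2 * k)) -
            Complex.exp (2 * Complex.I * k * Real.arctan (ε * τ * lam / 4))‖ ≤
          2 * (k : ℝ) ^ β * |ε * τ * lam / 4 - Real.arctan (ε * τ * lam / 4)| ^ β ∧
        2 * (k : ℝ) ^ β * |ε * τ * lam / 4 - Real.arctan (ε * τ * lam / 4)| ^ β ≤
          C * (k : ℝ) ^ β * (ε * τ * lam) ^ (3 * β) := by
  refine ⟨2, two_pos, fun t k τ lam ε β ht _ hτ hlam hε hβ0 hβ1 => ?_⟩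
  have hτ0 : 0 ≤ τ := hτ ▸ by positivity
  rw [show Complex.I * (ε * τ * lam / 2 * k) = ((ε * τ * lam / 2 * k : ℝ) : ℂ) * Complex.I by
      push_cast; ring,
    show 2 * Complex.I * k * arctan (ε * τ * lam / 4) =
      ((2 * k * arctan (ε * τ * lam / 4) : ℝ) : ℂ) * Complex.I by push_cast; ring]
  set s := ε * τ * lam
  have hs : 0 ≤ s := by positivity
  set d := s / 4 - arctan (s / 4)
  constructor
  · calc _ ≤ 2 * |(s / 2 * k - 2 * k * arctan (s / 4)) / 2| ^ β :=
          norm_exp_mul_I_sub_exp_mul_I_le_rpow _ _ hβ0 hβ1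
      _ = 2 * (k : ℝ) ^ β * |d| ^ β := by
          rw [show (s / 2 * k - 2 * k * arctan (s / 4)) / 2 = k * d by ring, abs_mul,
            Nat.abs_cast, mul_rpow (Nat.cast_nonneg k) (abs_nonneg d), mul_assoc]
  · have hd : |d| ≤ s ^ 3 :=
      (abs_self_sub_arctan_le (by positivity)).trans (by nlinarith [pow_nonneg hs 3])
    calc 2 * (k : ℝ) ^ β * |d| ^ β ≤ 2 * (k : ℝ) ^ β * (s ^ 3) ^ β := by
          gcongr
      _ = 2 * (k : ℝ) ^ β * s ^ (3 * β) := by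
          rw [← rpow_natCast s 3, ← rpow_mul hs, Nat.cast_ofNat]
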